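/- arXiv:1904.02043 — 3 statements merged into one kernel-verified Lean document; each statement's English description precedes it below -/
import Mathlib

section
/- Let ℓ₁ and ℓ₂ be lines in ℝ³, each at distance exactly 1 from the origin, and suppose the distance d between ℓ₁ and ℓ₂ satisfies 0 < d < 2. Set r = d/(2 − d) and let ℓᵢ' be the image of ℓᵢ under the dilation x ↦ (1+r)·x centered at the origin. Then each ℓᵢ' is at distance 1 + r from the origin, the distance between ℓ₁' and ℓ₂' equals 2r, and consequently the open solid cylinders Cᵢ = {x ∈ ℝ³ : dist(x, ℓᵢ') < r} (i = 1,2) are disjoint from each other and from the open unit ball, while the closures of C₁ and C₂ intersect. -/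
/-!
Dilation by `1 + r` multiplies all distances by `1 + r`, and `r = d / (2 - d)` is the solution
of `(1 + r) d = 2 r`. Hence the dilated lines are at distance `1 + r` from the origin and `2 r`
from each other, and the triangle inequality separates the open `r`-neighbourhoods. The distance
of two lines is attained, because their difference set is a closed affine subspace; the midpoint
of a closest pair is at distance `r` from both dilated lines, so it lies in both closures.
-/

noncomputable section

/-- Euclidean 3-space. -/
abbrev E3 := EuclideanSpace ℝ (Fin 3)

/-- The line through `p` with direction `v`. -/
def lineThrough (p v : E3) : Set E3 := {x | ∃ t : ℝ, x = p + t • v}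

/-- A line in ℝ³: a one-dimensional affine subspace, i.e. a set of the form
`{p + t • v : t ∈ ℝ}` with `v ≠ 0`. -/
def IsLine (ℓ : Set E3) : Prop := ∃ p v : E3, v ≠ 0 ∧ ℓ = lineThrough p v

/-- The distance between two subsets of ℝ³: `inf {‖a - b‖ : a ∈ A, b ∈ B}`. -/
def setDist (A B : Set E3) : ℝ := sInf {d : ℝ | ∃ a ∈ A, ∃ b ∈ B, d = dist a b}

open Metric Pointwise

section PseudoMetricSpace

variable {X : Type*} [PseudoMetricSpace X]

theorem disjoint_setOf_infDist_lt_ball {s : Set X} {y : X} {r ρ : ℝ}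
    (h : ρ + r ≤ infDist y s) : Disjoint {x | infDist x s < r} (ball y ρ) := by
  refine Set.disjoint_left.2 fun x (hx : infDist x s < r) (hxy : dist x y < ρ) => ?_
  have := infDist_le_infDist_add_dist (x := y) (y := x) (s := s)
  rw [dist_comm] at this
  linarith

theorem disjoint_setOf_infDist_lt_of_le_dist {s t : Set X} (hs : s.Nonempty) (ht : t.Nonempty)
    {r₁ r₂ : ℝ} (h : ∀ a ∈ s, ∀ b ∈ t, r₁ + r₂ ≤ dist a b) :
    Disjoint {x | infDist x s < r₁} {x | infDist x t < r₂} := by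
  refine Set.disjoint_left.2 fun x hx₁ hx₂ => ?_
  obtain ⟨a, ha, hxa⟩ := (infDist_lt_iff hs).1 hx₁
  obtain ⟨b, hb, hxb⟩ := (infDist_lt_iff ht).1 hx₂
  have := dist_triangle_left a b x
  linarith [h a ha b hb]

end PseudoMetricSpace

theorem mem_closure_setOf_infDist_lt {E : Type*} [NormedAddCommGroup E] [NormedSpace ℝ E]
    {s : Set E} {a x : E} {r : ℝ} (ha : a ∈ s) (hr : r ≠ 0) (hx : dist x a ≤ r) :
    x ∈ closure {y | infDist y s < r} :=
  closure_mono (s := ball a r) (fun _ hy => (infDist_le_dist_of_mem ha).trans_lt hy)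
    (by rwa [closure_ball a hr])

theorem setDist_eq_infDist_sub (A B : Set E3) : setDist A B = infDist 0 (A - B) := by
  have : {d : ℝ | ∃ a ∈ A, ∃ b ∈ B, d = dist a b} = dist 0 '' (A - B) := by
    ext d
    simp only [Set.mem_ofPred_eq, Set.mem_image, Set.mem_sub]
    constructor
    · rintro ⟨a, ha, b, hb, rfl⟩
      exact ⟨a - b, ⟨a, ha, b, hb, rfl⟩, by rw [dist_zero_left, dist_eq_norm]⟩
    · rintro ⟨_, ⟨a, ha, b, hb, rfl⟩, rfl⟩
      exact ⟨a, ha, b, hb, by rw [dist_zero_left, dist_eq_norm]⟩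
  rw [setDist, this, sInf_image', infDist_eq_iInf]

theorem setDist_le_dist {A B : Set E3} {a b : E3} (ha : a ∈ A) (hb : b ∈ B) :
    setDist A B ≤ dist a b := by
  rw [setDist_eq_infDist_sub, dist_eq_norm, ← dist_zero_left]
  exact infDist_le_dist_of_mem (Set.sub_mem_sub ha hb)

theorem setDist_smul {c : ℝ} (hc : c ≠ 0) (A B : Set E3) :
    setDist (c • A) (c • B) = ‖c‖ * setDist A B := by
  have : c • A - c • B = c • (A - B) := by
    ext x
    simp [Set.mem_sub, Set.mem_smul_set, smul_sub]
  rw [setDist_eq_infDist_sub, setDist_eq_infDist_sub, this, ← infDist_smul₀ hc, smul_zero]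

theorem lineThrough_sub_lineThrough (p₁ v₁ p₂ v₂ : E3) :
    lineThrough p₁ v₁ - lineThrough p₂ v₂ =
      (p₁ - p₂) +ᵥ (Submodule.span ℝ {v₁, v₂} : Set E3) := by
  ext x
  simp only [lineThrough, Set.mem_sub, Set.mem_vadd_set, SetLike.mem_coe,
    Submodule.mem_span_pair, Set.mem_ofPred_eq, vadd_eq_add]
  constructor
  · rintro ⟨_, ⟨s, rfl⟩, _, ⟨t, rfl⟩, rfl⟩
    exact ⟨s • v₁ - t • v₂, ⟨s, -t, by module⟩, by module⟩
  · rintro ⟨_, ⟨s, t, rfl⟩, rfl⟩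
    exact ⟨_, ⟨s, rfl⟩, _, ⟨-t, rfl⟩, by module⟩

namespace IsLine

variable {A B : Set E3}

theorem nonempty (hA : IsLine A) : A.Nonempty := by
  obtain ⟨p, v, -, rfl⟩ := hA
  exact ⟨p, 0, by simp⟩

theorem isClosed_sub (hA : IsLine A) (hB : IsLine B) : IsClosed (A - B) := by
  obtain ⟨p₁, v₁, -, rfl⟩ := hA
  obtain ⟨p₂, v₂, -, rfl⟩ := hB
  rw [lineThrough_sub_lineThrough]
  exact (Submodule.closed_of_finiteDimensional _).vadd _

theorem exists_dist_eq_setDist (hA : IsLine A) (hB : IsLine B) :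
    ∃ a ∈ A, ∃ b ∈ B, dist a b = setDist A B := by
  obtain ⟨_, ⟨a, ha, b, hb, rfl⟩, hab⟩ :=
    (hA.isClosed_sub hB).exists_infDist_eq_dist (hA.nonempty.sub hB.nonempty) 0
  exact ⟨a, ha, b, hb, by rw [setDist_eq_infDist_sub, hab, dist_zero_left, dist_eq_norm]⟩

end IsLine

theorem stmt0 (ℓ₁ ℓ₂ : Set E3) (h₁ : IsLine ℓ₁) (h₂ : IsLine ℓ₂)
    (ht₁ : Metric.infDist 0 ℓ₁ = 1) (ht₂ : Metric.infDist 0 ℓ₂ = 1)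
    (d : ℝ) (hd : d = setDist ℓ₁ ℓ₂) (hd0 : 0 < d) (hd2 : d < 2)
    (r : ℝ) (hr : r = d / (2 - d))
    (ℓ₁' ℓ₂' : Set E3)
    (hl₁' : ℓ₁' = (fun x : E3 => (1 + r) • x) '' ℓ₁)
    (hl₂' : ℓ₂' = (fun x : E3 => (1 + r) • x) '' ℓ₂)
    (C₁ C₂ : Set E3)
    (hC₁ : C₁ = {x : E3 | Metric.infDist x ℓ₁' < r})
    (hC₂ : C₂ = {x : E3 | Metric.infDist x ℓ₂' < r}) :
    Metric.infDist 0 ℓ₁' = 1 + r ∧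
    Metric.infDist 0 ℓ₂' = 1 + r ∧
    setDist ℓ₁' ℓ₂' = 2 * r ∧
    Disjoint C₁ C₂ ∧
    Disjoint C₁ (Metric.ball (0 : E3) 1) ∧
    Disjoint C₂ (Metric.ball (0 : E3) 1) ∧
    (closure C₁ ∩ closure C₂).Nonempty := by
  have hr0 : 0 < r := by rw [hr]; exact div_pos hd0 (by linarith)
  have hc : ‖1 + r‖ = 1 + r := Real.norm_of_nonneg (by linarith)
  have hscale : (1 + r) * d = 2 * r := by
    rw [hr]; field_simp [(sub_pos.2 hd2).ne']; ring
  simp only [Set.image_smul] at hl₁' hl₂'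
  subst hl₁' hl₂' hC₁ hC₂
  have g₁ : infDist 0 ((1 + r) • ℓ₁) = 1 + r := by
    rw [← smul_zero (1 + r), infDist_smul₀ (by linarith), hc, ht₁, mul_one]
  have g₂ : infDist 0 ((1 + r) • ℓ₂) = 1 + r := by
    rw [← smul_zero (1 + r), infDist_smul₀ (by linarith), hc, ht₂, mul_one]
  have g₃ : setDist ((1 + r) • ℓ₁) ((1 + r) • ℓ₂) = 2 * r := by
    rw [setDist_smul (by linarith), hc, ← hd, hscale]
  obtain ⟨a, ha, b, hb, hab⟩ := h₁.exists_dist_eq_setDist h₂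
  have hab' : dist ((1 + r) • a) ((1 + r) • b) = 2 * r := by
    rw [dist_smul₀, hc, hab, ← hd, hscale]
  refine ⟨g₁, g₂, g₃, ?_, disjoint_setOf_infDist_lt_ball (by linarith),
    disjoint_setOf_infDist_lt_ball (by linarith), ⟨midpoint ℝ ((1 + r) • a) ((1 + r) • b), ?_, ?_⟩⟩
  · refine disjoint_setOf_infDist_lt_of_le_dist (h₁.nonempty.smul_set) (h₂.nonempty.smul_set)
      fun x hx y hy => ?_
    linarith [setDist_le_dist hx hy]
  · refine mem_closure_setOf_infDist_lt (Set.smul_mem_smul_set ha) hr0.ne' ?_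
    rw [dist_midpoint_left, hab']; norm_num; linarith
  · refine mem_closure_setOf_infDist_lt (Set.smul_mem_smul_set hb) hr0.ne' ?_
    rw [dist_midpoint_right, hab']; norm_num; linarith
end
end

section
/- Let 0 < S < 1, 0 < δ < π/2, and 0 < α ≤ π/2. Set p = (√(1 − S²), 0, S) and u = (S, 0, −√(1 − S²)), and let ℓ₁ be the line through p with direction cos δ · u + sin δ · (0, 1, 0). Let ℓ₂ be the image of ℓ₁ under the rotation about the z-axis by angle 2α. Then, with T = tan δ, the squared distance between ℓ₁ and ℓ₂ equals d² = 4 sin²α (1 − S²)² T² / ((S² + T²)(1 − S² sin²α + T² cos²α)). -/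
noncomputable section

open Real

/-- A point of ℝ³ from its coordinates. -/
def pt (a b c : ℝ) : E3 := WithLp.toLp 2 ![a, b, c]

/-- Rotation about the z-axis by the angle `θ`. -/
def rotZ (θ : ℝ) (x : E3) : E3 :=
  pt (x 0 * Real.cos θ - x 1 * Real.sin θ) (x 0 * Real.sin θ + x 1 * Real.cos θ) (x 2)

/-!
The distance between lines `p + ℝ v` and `q + ℝ w` is the length of the component of `q - p`
orthogonal to `span {v, w}`. In ℝ³, when `v` and `w` are independent, that complement is the line
spanned by any common normal `n`, so the squared distance is `⟪n, q - p⟫² / ‖n‖²`. After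
rescaling the direction of `ℓ₁` to `(S, tan δ, -√(1 - S²))`, everything is explicit polynomial
algebra in `sin α`, `cos α`.
-/

section

open Submodule

variable {F : Type*} [NormedAddCommGroup F] [InnerProductSpace ℝ F]

theorem isLeast_range_dist_add_smul (p q v w : F) [(span ℝ {v, w}).HasOrthogonalProjection] :
    IsLeast (Set.range fun ts : ℝ × ℝ => dist (p + ts.1 • v) (q + ts.2 • w))
      ‖(span ℝ {v, w})ᗮ.starProjection (q - p)‖ := by
  set K := span ℝ {v, w}
  set r := Kᗮ.starProjection (q - p)
  have hr : r = q - p - K.starProjection (q - p) := by simp [r]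
  have hrK : r ∈ Kᗮ := Kᗮ.starProjection_apply_mem _
  obtain ⟨a, b, hab⟩ := mem_span_pair.mp (K.starProjection_apply_mem (q - p))
  refine ⟨⟨(a, -b), ?_⟩, ?_⟩
  · dsimp only
    rw [dist_comm, dist_eq_norm, hr, ← hab, neg_smul]
    congr 1; abel
  · rintro _ ⟨⟨t, s⟩, rfl⟩
    have hk : q - p - r + s • w - t • v ∈ K := by
      rw [hr, sub_sub_cancel]
      exact sub_mem (add_mem (K.starProjection_apply_mem _)
        (smul_mem _ _ (subset_span (by simp)))) (smul_mem _ _ (subset_span (by simp)))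
    have hsplit : q + s • w - (p + t • v) = r + (q - p - r + s • w - t • v) := by abel
    dsimp only
    rw [dist_comm, dist_eq_norm, hsplit, mul_self_le_mul_self_iff (norm_nonneg _) (norm_nonneg _),
      norm_add_sq_eq_norm_sq_add_norm_sq_real (K.inner_left_of_mem_orthogonal hk hrK)]
    exact le_add_of_nonneg_right (mul_self_nonneg _)

theorem orthogonal_span_pair_eq_span_singleton [FiniteDimensional ℝ F]
    (hF : Module.finrank ℝ F = 3) {v w n : F} (hvw : LinearIndependent ℝ ![v, w]) (hn : n ≠ 0)
    (hvn : inner ℝ v n = 0) (hwn : inner ℝ w n = 0) :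
    (span ℝ {v, w})ᗮ = ℝ ∙ n := by
  symm
  apply eq_of_le_of_finrank_eq
  · rw [span_singleton_le_iff_mem, mem_orthogonal]
    intro x hx
    obtain ⟨a, b, rfl⟩ := mem_span_pair.mp hx
    simp [inner_add_left, inner_smul_left, hvn, hwn]
  · have hdim : Module.finrank ℝ (span ℝ {v, w}) + 1 = Module.finrank ℝ F := by
      rw [← Matrix.range_cons_cons_empty v w ![], finrank_span_eq_card hvw, hF]; rfl
    rw [finrank_span_singleton hn, finrank_add_finrank_orthogonal' hdim]

theorem norm_starProjection_singleton (n x : F) :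
    ‖(ℝ ∙ n).starProjection x‖ = |inner ℝ n x| / ‖n‖ := by
  rcases eq_or_ne n 0 with rfl | hn
  · simp
  rw [starProjection_singleton, norm_smul]
  simp only [Real.ringHom_apply, norm_div, norm_eq_abs, abs_pow, abs_norm]
  field_simp

end

open Submodule in
theorem setDist_lineThrough_eq_norm_starProjection (p q v w : E3) :
    setDist (lineThrough p v) (lineThrough q w) =
      ‖(span ℝ {v, w})ᗮ.starProjection (q - p)‖ := by
  have hset : {d | ∃ a ∈ lineThrough p v, ∃ b ∈ lineThrough q w, d = dist a b}
      = Set.range fun ts : ℝ × ℝ => dist (p + ts.1 • v) (q + ts.2 • w) := by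
    ext d
    simp only [lineThrough, Set.mem_ofPred_eq, Set.mem_range, Prod.exists]
    constructor
    · rintro ⟨_, ⟨t, rfl⟩, _, ⟨s, rfl⟩, rfl⟩
      exact ⟨t, s, rfl⟩
    · rintro ⟨t, s, rfl⟩
      exact ⟨_, ⟨t, rfl⟩, _, ⟨s, rfl⟩, rfl⟩
  rw [setDist, hset, (isLeast_range_dist_add_smul p q v w).csInf_eq]

theorem setDist_lineThrough_sq_of_inner_eq_zero {p q v w n : E3}
    (hvw : LinearIndependent ℝ ![v, w]) (hn : n ≠ 0)
    (hvn : inner ℝ v n = 0) (hwn : inner ℝ w n = 0) :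
    setDist (lineThrough p v) (lineThrough q w) ^ 2 = inner ℝ n (q - p) ^ 2 / ‖n‖ ^ 2 := by
  have h := orthogonal_span_pair_eq_span_singleton finrank_euclideanSpace_fin hvw hn hvn hwn
  simp only [setDist_lineThrough_eq_norm_starProjection, h, norm_starProjection_singleton,
    div_pow, sq_abs]

theorem inner_pt (a b c a' b' c' : ℝ) :
    inner ℝ (pt a b c) (pt a' b' c') = a * a' + b * b' + c * c' := by
  simp only [pt, PiLp.inner_apply, RCLike.inner_apply, Real.ringHom_apply, Fin.sum_univ_three,
    Matrix.cons_val_zero, Matrix.cons_val_one, Matrix.cons_val]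
  ring

theorem pt_sub_pt (a b c a' b' c' : ℝ) :
    pt a b c - pt a' b' c' = pt (a - a') (b - b') (c - c') := by
  ext i; fin_cases i <;> simp [pt]

theorem smul_pt (k a b c : ℝ) : k • pt a b c = pt (k * a) (k * b) (k * c) := by
  ext i; fin_cases i <;> simp [pt]

theorem pt_add_pt (a b c a' b' c' : ℝ) :
    pt a b c + pt a' b' c' = pt (a + a') (b + b') (c + c') := by
  ext i; fin_cases i <;> simp [pt]

theorem rotZ_pt (θ a b c : ℝ) :
    rotZ θ (pt a b c) = pt (a * cos θ - b * sin θ) (a * sin θ + b * cos θ) c := by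
  simp [rotZ, pt]

theorem rotZ_add_smul (θ t : ℝ) (x y : E3) :
    rotZ θ (x + t • y) = rotZ θ x + t • rotZ θ y := by
  ext i; fin_cases i <;> simp [rotZ, pt] <;> ring

theorem image_rotZ_lineThrough (θ : ℝ) (p v : E3) :
    rotZ θ '' lineThrough p v = lineThrough (rotZ θ p) (rotZ θ v) := by
  ext x
  simp only [lineThrough, Set.mem_image, Set.mem_ofPred_eq]
  constructor
  · rintro ⟨y, ⟨t, rfl⟩, rfl⟩
    exact ⟨t, rotZ_add_smul θ t p v⟩
  · rintro ⟨t, rfl⟩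
    exact ⟨p + t • v, ⟨t, rfl⟩, rotZ_add_smul θ t p v⟩

theorem lineThrough_smul (p v : E3) {k : ℝ} (hk : k ≠ 0) :
    lineThrough p (k • v) = lineThrough p v := by
  ext x
  constructor
  · rintro ⟨t, rfl⟩
    exact ⟨t * k, by rw [smul_smul]⟩
  · rintro ⟨t, rfl⟩
    exact ⟨t / k, by rw [smul_smul, div_mul_cancel₀ _ hk]⟩

theorem linearIndependent_pt_rotZ {a b c θ : ℝ} (hab : a ^ 2 + b ^ 2 ≠ 0) (hc : c ≠ 0)
    (hθ : cos θ ≠ 1) : LinearIndependent ℝ ![pt a b c, rotZ θ (pt a b c)] := by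
  rw [LinearIndependent.pair_iff]
  intro s t hst
  rw [rotZ_pt, smul_pt, smul_pt, pt_add_pt] at hst
  have h0 := congrArg (· 0) hst
  have h1 := congrArg (· 1) hst
  have h2 := congrArg (· 2) hst
  simp only [pt, Matrix.cons_val_zero, Matrix.cons_val_one, Matrix.cons_val, PiLp.zero_apply]
    at h0 h1 h2
  obtain rfl : t = -s := by
    have : (s + t) * c = 0 := by linear_combination h2
    linarith [(mul_eq_zero.mp this).resolve_right hc]
  -- `pt a b c - rotZ θ (pt a b c)` is horizontal of squared length `2 (a² + b²) (1 - cos θ)`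
  have key : s ^ 2 * (2 * (a ^ 2 + b ^ 2) * (1 - cos θ)) = 0 := by
    linear_combination (s * a - s * (a * cos θ - b * sin θ)) * h0
      + (s * b - s * (a * sin θ + b * cos θ)) * h1
      - s ^ 2 * (a ^ 2 + b ^ 2) * sin_sq_add_cos_sq θ
  have hs : s = 0 := by
    have hne : 2 * (a ^ 2 + b ^ 2) * (1 - cos θ) ≠ 0 :=
      mul_ne_zero (mul_ne_zero two_ne_zero hab) (sub_ne_zero.mpr hθ.symm)
    simpa [hne] using key
  exact ⟨hs, by rw [hs, neg_zero]⟩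

theorem rotZ_two_mul_pt (α a b c : ℝ) :
    rotZ (2 * α) (pt a b c) = pt (a * (cos α ^ 2 - sin α ^ 2) - b * (2 * sin α * cos α))
      (a * (2 * sin α * cos α) + b * (cos α ^ 2 - sin α ^ 2)) c := by
  rw [rotZ_pt, cos_two_mul', sin_two_mul]

theorem setDist_sq_lineThrough_rotZ_two_mul {S T C : ℝ} (α : ℝ) (hS : S ≠ 0) (hC : 0 < C)
    (hC2 : C ^ 2 = 1 - S ^ 2) (hα : sin α ≠ 0) :
    setDist (lineThrough (pt C 0 S) (pt S T (-C)))
        (lineThrough (rotZ (2 * α) (pt C 0 S)) (rotZ (2 * α) (pt S T (-C)))) ^ 2 =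
      4 * sin α ^ 2 * (1 - S ^ 2) ^ 2 * T ^ 2 /
        ((S ^ 2 + T ^ 2) * (1 - S ^ 2 * sin α ^ 2 + T ^ 2 * cos α ^ 2)) := by
  have hsc : sin α ^ 2 + cos α ^ 2 = 1 := sin_sq_add_cos_sq α
  -- a common normal of the two lines: `(v × rotZ (2α) v) / (2 sin α)` for `v = pt S T (-C)`
  set n := pt (C * (S * cos α - T * sin α)) (C * (S * sin α + T * cos α))
    (cos α * (S ^ 2 + T ^ 2))
  have hnn : ‖n‖ ^ 2 = (S ^ 2 + T ^ 2) * (1 - S ^ 2 * sin α ^ 2 + T ^ 2 * cos α ^ 2) := by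
    rw [← real_inner_self_eq_norm_sq, inner_pt]
    linear_combination (S ^ 2 + T ^ 2) * (sin α ^ 2 + cos α ^ 2) * hC2 + (S ^ 2 + T ^ 2) * hsc
  have hn : n ≠ 0 := by
    have hD : 0 < 1 - S ^ 2 * sin α ^ 2 + T ^ 2 * cos α ^ 2 := by
      nlinarith [sq_nonneg (T * cos α), sq_nonneg (S * cos α)]
    have hpos : 0 < ‖n‖ ^ 2 := hnn ▸ mul_pos (by positivity) hD
    exact norm_ne_zero_iff.mp fun h => by simp [h] at hpos
  have hvn : inner ℝ (pt S T (-C)) n = 0 := by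
    rw [inner_pt]; ring
  have hwn : inner ℝ (rotZ (2 * α) (pt S T (-C))) n = 0 := by
    rw [rotZ_two_mul_pt, inner_pt]
    linear_combination C * cos α * (S ^ 2 + T ^ 2) * hsc
  have hqp : inner ℝ n (rotZ (2 * α) (pt C 0 S) - pt C 0 S) = 2 * T * sin α * (1 - S ^ 2) := by
    rw [rotZ_two_mul_pt, pt_sub_pt, inner_pt]
    linear_combination C ^ 2 * (S * cos α + T * sin α) * hsc + 2 * T * sin α * hC2
  have hvw : LinearIndependent ℝ ![pt S T (-C), rotZ (2 * α) (pt S T (-C))] := by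
    refine linearIndependent_pt_rotZ (by positivity) (neg_ne_zero.mpr hC.ne') ?_
    rw [cos_two_mul_eq_one_sub]
    simpa using hα
  rw [setDist_lineThrough_sq_of_inner_eq_zero hvw hn hvn hwn, hqp, hnn]
  ring

theorem stmt4 (S δ α : ℝ) (hS0 : 0 < S) (hS1 : S < 1)
    (hδ0 : 0 < δ) (hδ1 : δ < π / 2) (hα0 : 0 < α) (hα1 : α ≤ π / 2)
    (p u : E3)
    (hp : p = pt (Real.sqrt (1 - S ^ 2)) 0 S)
    (hu : u = pt S 0 (-Real.sqrt (1 - S ^ 2)))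
    (ℓ₁ ℓ₂ : Set E3)
    (hℓ₁ : ℓ₁ = lineThrough p (Real.cos δ • u + Real.sin δ • pt 0 1 0))
    (hℓ₂ : ℓ₂ = rotZ (2 * α) '' ℓ₁)
    (T : ℝ) (hT : T = Real.tan δ) :
    (setDist ℓ₁ ℓ₂) ^ 2 =
      4 * Real.sin α ^ 2 * (1 - S ^ 2) ^ 2 * T ^ 2 /
        ((S ^ 2 + T ^ 2) * (1 - S ^ 2 * Real.sin α ^ 2 + T ^ 2 * Real.cos α ^ 2)) := by
  set C := √(1 - S ^ 2)
  have hC2 : C ^ 2 = 1 - S ^ 2 := sq_sqrt (by nlinarith)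
  have hC : 0 < C := sqrt_pos.mpr (by nlinarith)
  have hcδ : 0 < cos δ := cos_pos_of_mem_Ioo ⟨by linarith, hδ1⟩
  have hsα : 0 < sin α := sin_pos_of_pos_of_lt_pi hα0 (by linarith [pi_pos])
  have hdir : cos δ • u + sin δ • pt 0 1 0 = cos δ • pt S T (-C) := by
    simp only [hu, hT, tan_eq_sin_div_cos, smul_pt, pt_add_pt]
    congr 1 <;> field_simp <;> ring
  rw [hℓ₂, hℓ₁, hdir, lineThrough_smul _ _ hcδ.ne', image_rotZ_lineThrough, hp]
  exact setDist_sq_lineThrough_rotZ_two_mul α hS0.ne' hC hC2 hsα.ne'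
end
end

section
/- Let x = (9 − √5 − √(6(5 + √5)))/4 and r = 11 − 5√5 + √(3(85 − 38√5)). Then r = 12x³ − 62x² + 74x − 3. In particular, the field extensions ℚ(x) and ℚ(r) of ℚ inside ℝ coincide. -/
/-!
With `t = √(6(5 + √5))` the nested radical in `r` denests as `t(5√5 - 11)/4`, so `r` lies in
`ℚ(√5, t) = ℚ(x)`. Squaring `4x - 9 + √5 = -t` gives `√5 (3 - x) = 2x² - 9x + 7`, which eliminates
`√5` and yields the cubic `r = p(x)`, and also shows that `x` is a root of
`m = X⁴ - 9X³ + 26X² - 24X + 1`. Since `q ∘ p ≡ X (mod m)` for `q = (-5X³ + 223X² + 37X - 7)/8`,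
also `x = q(r)`, so each of `x`, `r` is a polynomial in the other.
-/

open Polynomial IntermediateField

theorem IntermediateField.aeval_mem_adjoin_simple {F E : Type*} [Field F] [Field E] [Algebra F E]
    (α : E) (p : F[X]) : aeval α p ∈ F⟮α⟯ := by
  rw [← AdjoinSimple.coe_aeval_gen_apply]
  exact SetLike.coe_mem _

theorem IntermediateField.adjoin_simple_eq_of_aeval {F E : Type*} [Field F] [Field E]
    [Algebra F E] {α β : E} (p q : F[X]) (hβ : β = aeval α p) (hα : α = aeval β q) :
    F⟮α⟯ = F⟮β⟯ :=
  le_antisymm (adjoin_simple_le_iff.2 (hα ▸ aeval_mem_adjoin_simple β q))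
    (adjoin_simple_le_iff.2 (hβ ▸ aeval_mem_adjoin_simple α p))

theorem sqrt_five_mul_three_sub_eq {x : ℝ}
    (hx : x = (9 - √5 - √(6 * (5 + √5))) / 4) :
    √5 * (3 - x) = 2 * x ^ 2 - 9 * x + 7 := by
  have hs : √5 ^ 2 = 5 := Real.sq_sqrt (by norm_num)
  have ht : √(6 * (5 + √5)) ^ 2 = 6 * (5 + √5) := Real.sq_sqrt (by positivity)
  subst hx
  linear_combination (-1/8 : ℝ) * ht + (1/8 : ℝ) * hs

theorem quartic_eq_zero_of_sqrt_five_mul {x : ℝ} (h : √5 * (3 - x) = 2 * x ^ 2 - 9 * x + 7) :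
    x ^ 4 - 9 * x ^ 3 + 26 * x ^ 2 - 24 * x + 1 = 0 := by
  have hs : √5 ^ 2 = 5 := Real.sq_sqrt (by norm_num)
  linear_combination (-(2 * x ^ 2 - 9 * x + 7 + √5 * (3 - x)) * h + (3 - x) ^ 2 * hs) / 4

theorem sqrt_three_mul_eq_sqrt_six_mul :
    √(3 * (85 - 38 * √5)) = √(6 * (5 + √5)) * (5 * √5 - 11) / 4 := by
  have hs : √5 ^ 2 = 5 := Real.sq_sqrt (by norm_num)
  have ht : √(6 * (5 + √5)) ^ 2 = 6 * (5 + √5) := Real.sq_sqrt (by positivity)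
  have h11 : 0 ≤ 5 * √5 - 11 := by nlinarith [Real.sqrt_nonneg 5]
  rw [Real.sqrt_eq_iff_eq_sq (by nlinarith)
    (div_nonneg (mul_nonneg (Real.sqrt_nonneg _) h11) (by norm_num))]
  linear_combination (-(5 * √5 - 11) ^ 2 / 16) * ht - (45 + 75 * √5) / 8 * hs

theorem eq_eleven_mul_sub_add_sqrt_five_mul {x r : ℝ} (hx : x = (9 - √5 - √(6 * (5 + √5))) / 4)
    (hr : r = 11 - 5 * √5 + √(3 * (85 - 38 * √5))) :
    r = 11 * x - 20 + √5 * (9 - 5 * x) := by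
  have hs : √5 ^ 2 = 5 := Real.sq_sqrt (by norm_num)
  rw [hr, sqrt_three_mul_eq_sqrt_six_mul, hx]
  linear_combination (-5 / 4 : ℝ) * hs

theorem eq_cubic_of_sqrt_five_mul {x r : ℝ} (hx3 : x ≠ 3)
    (h : √5 * (3 - x) = 2 * x ^ 2 - 9 * x + 7) (hr : r = 11 * x - 20 + √5 * (9 - 5 * x)) :
    r = 12 * x ^ 3 - 62 * x ^ 2 + 74 * x - 3 := by
  have hm := quartic_eq_zero_of_sqrt_five_mul h
  have hprod : (3 - x) * (r - (12 * x ^ 3 - 62 * x ^ 2 + 74 * x - 3)) = 0 := by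
    linear_combination (3 - x) * hr + (9 - 5 * x) * h + 12 * hm
  exact sub_eq_zero.1 ((mul_eq_zero.1 hprod).resolve_left (sub_ne_zero.2 hx3.symm))

theorem eq_inverse_cubic_of_quartic_eq_zero {x r : ℝ}
    (hm : x ^ 4 - 9 * x ^ 3 + 26 * x ^ 2 - 24 * x + 1 = 0)
    (hr : r = 12 * x ^ 3 - 62 * x ^ 2 + 74 * x - 3) :
    x = (-5 * r ^ 3 + 223 * r ^ 2 + 37 * r - 7) / 8 := by
  subst hr
  linear_combination
    (-253 + 7212 * x - 14909 * x ^ 2 + 15210 * x ^ 3 - 7020 * x ^ 4 + 1080 * x ^ 5) * hm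

theorem stmt11 (x r : ℝ)
    (hx : x = (9 - Real.sqrt 5 - Real.sqrt (6 * (5 + Real.sqrt 5))) / 4)
    (hr : r = 11 - 5 * Real.sqrt 5 + Real.sqrt (3 * (85 - 38 * Real.sqrt 5))) :
    r = 12 * x ^ 3 - 62 * x ^ 2 + 74 * x - 3 ∧
    IntermediateField.adjoin ℚ ({x} : Set ℝ) =
      IntermediateField.adjoin ℚ ({r} : Set ℝ) := by
  have hx3 : x ≠ 3 :=
    ne_of_lt (by rw [hx]; linarith [Real.sqrt_nonneg 5, Real.sqrt_nonneg (6 * (5 + √5))])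
  have h5 := sqrt_five_mul_three_sub_eq hx
  have hcubic := eq_cubic_of_sqrt_five_mul hx3 h5 (eq_eleven_mul_sub_add_sqrt_five_mul hx hr)
  have hinv := eq_inverse_cubic_of_quartic_eq_zero (quartic_eq_zero_of_sqrt_five_mul h5) hcubic
  refine ⟨hcubic, adjoin_simple_eq_of_aeval (12 * X ^ 3 - 62 * X ^ 2 + 74 * X - 3)
    (C (1 / 8) * (-5 * X ^ 3 + 223 * X ^ 2 + 37 * X - 7)) ?_ ?_⟩
  · simpa [map_ofNat] using hcubic
  · rw [hinv]
    simp only [one_div, map_mul, aeval_C, map_inv₀, map_ofNat, aeval_sub, map_add, map_pow,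
      aeval_X, neg_mul, aeval_neg]
    ring
end
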